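/- For any vector field X on M_n, the trace with respect to the synectic metric of the covariant derivative of the associated covector field of the vertical lift vanishes: ^S g^{BA} ^S∇_B (^V X)_A = 0; and for the complete lift, ^S g^{BA} ^S∇_B (^C X)_A = 2 g^{ji} ∇_j X_i, i.e. twice the divergence of X on (M_n, g). -/

import Mathlib

open scoped BigOperators

noncomputable section

namespace Synectic

variable {n : ℕ}

/-- Partial derivative `∂_j f` of a real-valued function on `ℝⁿ` (global chart of `M_n`). -/
def pd (f : (Fin n → ℝ) → ℝ) (j : Fin n) (x : Fin n → ℝ) : ℝ :=
  fderiv ℝ f x (Pi.single j 1)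

/-- Christoffel symbols `Γ^h_{ji}` of the metric `g` with inverse `ginv`. -/
def Christoffel (g ginv : (Fin n → ℝ) → Fin n → Fin n → ℝ) (h j i : Fin n)
    (x : Fin n → ℝ) : ℝ :=
  (1 / 2) * ∑ s, ginv x h s *
    (pd (fun z => g z s i) j x + pd (fun z => g z j s) i x - pd (fun z => g z j i) s x)

/-- Covariant derivative `∇_j X^h` of a vector field. -/
def covVec (g ginv : (Fin n → ℝ) → Fin n → Fin n → ℝ)
    (X : (Fin n → ℝ) → Fin n → ℝ) (j h : Fin n) (x : Fin n → ℝ) : ℝ :=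
  pd (fun z => X z h) j x + ∑ i, Christoffel g ginv h j i x * X x i

/-- Covariant derivative `∇_j ω_i` of a covector field. -/
def covCov (g ginv : (Fin n → ℝ) → Fin n → Fin n → ℝ)
    (ω : (Fin n → ℝ) → Fin n → ℝ) (j i : Fin n) (x : Fin n → ℝ) : ℝ :=
  pd (fun z => ω z i) j x - ∑ k, Christoffel g ginv k j i x * ω x k

/-- Covariant derivative `∇_s a_{ji}` of a `(0,2)`-tensor field. -/
def cov2 (g ginv : (Fin n → ℝ) → Fin n → Fin n → ℝ)
    (a : (Fin n → ℝ) → Fin n → Fin n → ℝ) (s j i : Fin n) (x : Fin n → ℝ) : ℝ :=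
  pd (fun z => a z j i) s x - ∑ l, Christoffel g ginv l s j x * a x l i
    - ∑ l, Christoffel g ginv l s i x * a x j l

/-- The tensor `H^h_{ji} = (1/2) g^{hs} (∇_j a_{si} + ∇_i a_{js} - ∇_s a_{ji})`. -/
def Hcoef (g ginv a : (Fin n → ℝ) → Fin n → Fin n → ℝ) (h j i : Fin n)
    (x : Fin n → ℝ) : ℝ :=
  (1 / 2) * ∑ s, ginv x h s *
    (cov2 g ginv a j s i x + cov2 g ginv a i j s x - cov2 g ginv a s j i x)

/-- Components `R_{kji}{}^h` of the Riemann curvature tensor of `g`. -/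
def Riem (g ginv : (Fin n → ℝ) → Fin n → Fin n → ℝ) (k j i h : Fin n)
    (x : Fin n → ℝ) : ℝ :=
  pd (fun z => Christoffel g ginv h j i z) k x - pd (fun z => Christoffel g ginv h k i z) j x
    + ∑ m, Christoffel g ginv m j i x * Christoffel g ginv h k m x
    - ∑ m, Christoffel g ginv m k i x * Christoffel g ginv h j m x

/-- The covector field `X_i = g_{ih} X^h` associated with a vector field `X`. -/
def lower (g : (Fin n → ℝ) → Fin n → Fin n → ℝ) (X : (Fin n → ℝ) → Fin n → ℝ)
    (x : Fin n → ℝ) (i : Fin n) : ℝ :=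
  ∑ h, g x i h * X x h

/-- A point of the tangent bundle `T(M_n)` in induced coordinates `(xʰ, yʰ)`. -/
abbrev TPt (n : ℕ) := (Fin n → ℝ) × (Fin n → ℝ)

/-- Index type for induced coordinates on `T(M_n)`: `inl` = base indices, `inr` = fibre indices. -/
abbrev Idx (n : ℕ) := Fin n ⊕ Fin n

/-- Coordinate directions on `T(M_n)`. -/
def eIdx : Idx n → TPt n
  | Sum.inl j => (Pi.single j 1, 0)
  | Sum.inr j => (0, Pi.single j 1)

/-- Partial derivative `∂_A f` on `T(M_n)` (`∂_j` for `A = inl j`, `∂_{j̄}` for `A = inr j`). -/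
def pdT (f : TPt n → ℝ) (A : Idx n) (p : TPt n) : ℝ :=
  fderiv ℝ f p (eIdx A)

/-- Covariant components of the synectic metric `^S g = ^C g + ^V a` on `T(M_n)`. -/
def synMetric (g a : (Fin n → ℝ) → Fin n → Fin n → ℝ) (p : TPt n) :
    Idx n → Idx n → ℝ
  | Sum.inl j, Sum.inl i => a p.1 j i + ∑ s, p.2 s * pd (fun z => g z j i) s p.1
  | Sum.inl j, Sum.inr i => g p.1 j i
  | Sum.inr j, Sum.inl i => g p.1 j i
  | Sum.inr _, Sum.inr _ => 0

/-- Contravariant components of the synectic metric. -/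
def synMetricInv (ginv a : (Fin n → ℝ) → Fin n → Fin n → ℝ) (p : TPt n) :
    Idx n → Idx n → ℝ
  | Sum.inl _, Sum.inl _ => 0
  | Sum.inl j, Sum.inr i => ginv p.1 j i
  | Sum.inr j, Sum.inl i => ginv p.1 j i
  | Sum.inr j, Sum.inr i =>
      ∑ s, p.2 s * pd (fun z => ginv z j i) s p.1
        - ∑ t, ∑ s, ginv p.1 j t * a p.1 t s * ginv p.1 s i

/-- Vertical lift `^V X` of a vector field, with components `(0, Xʰ)`. -/
def vlift (X : (Fin n → ℝ) → Fin n → ℝ) (p : TPt n) : Idx n → ℝ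
  | Sum.inl _ => 0
  | Sum.inr h => X p.1 h

/-- Complete lift `^C X` of a vector field, with components `(Xʰ, yˢ ∂_s Xʰ)`. -/
def clift (X : (Fin n → ℝ) → Fin n → ℝ) (p : TPt n) : Idx n → ℝ
  | Sum.inl h => X p.1 h
  | Sum.inr h => ∑ s, p.2 s * pd (fun z => X z h) s p.1

/-- Horizontal lift `^H X` of a vector field, with components `(Xʰ, -yˢ Γʰ_{si} Xⁱ)`. -/
def hlift (g ginv : (Fin n → ℝ) → Fin n → Fin n → ℝ)
    (X : (Fin n → ℝ) → Fin n → ℝ) (p : TPt n) : Idx n → ℝ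
  | Sum.inl h => X p.1 h
  | Sum.inr h => -∑ s, ∑ i, p.2 s * Christoffel g ginv h s i p.1 * X p.1 i

/-- Components of the Lie derivative `(𝓛_V G)_{AB}` of a metric `G` on `T(M_n)` along `V`. -/
def lieDerivT (G : TPt n → Idx n → Idx n → ℝ) (V : TPt n → Idx n → ℝ)
    (A B : Idx n) (p : TPt n) : ℝ :=
  ∑ C, (V p C * pdT (fun q => G q A B) C p
      + G p A C * pdT (fun q => V q C) B p
      + G p C B * pdT (fun q => V q C) A p)

/-- `V` is a Killing vector field of the metric `G` on `T(M_n)`. -/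
def IsKillingT (G : TPt n → Idx n → Idx n → ℝ) (V : TPt n → Idx n → ℝ) : Prop :=
  ∀ p A B, lieDerivT G V A B p = 0

/-- Christoffel symbols of a metric `G` (with inverse `Ginv`) on `T(M_n)`. -/
def ChristoffelT (G Ginv : TPt n → Idx n → Idx n → ℝ) (A B C : Idx n) (p : TPt n) : ℝ :=
  (1 / 2) * ∑ D, Ginv p A D *
    (pdT (fun q => G q D C) B p + pdT (fun q => G q B D) C p - pdT (fun q => G q B C) D p)

/-- Covariant derivative `∇_B ω_A` on `T(M_n)` of a covector field w.r.t. the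
Levi-Civita connection of `(G, Ginv)`. -/
def covCovT (G Ginv : TPt n → Idx n → Idx n → ℝ) (ω : TPt n → Idx n → ℝ)
    (B A : Idx n) (p : TPt n) : ℝ :=
  pdT (fun q => ω q A) B p - ∑ C, ChristoffelT G Ginv C B A p * ω p C

/-- Covariant derivative `∇_B V^A` on `T(M_n)` of a vector field w.r.t. a linear
connection given by its components `Conn^A_{BC}`. -/
def covVecT (Conn : Idx n → Idx n → Idx n → TPt n → ℝ) (V : TPt n → Idx n → ℝ)
    (B A : Idx n) (p : TPt n) : ℝ :=
  pdT (fun q => V q A) B p + ∑ C, Conn A B C p * V p C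

/-- Components `Γ̃^A_{BC}` of the metric connection `∇̃` of the synectic metric. -/
def GammaTilde (g ginv a : (Fin n → ℝ) → Fin n → Fin n → ℝ) :
    Idx n → Idx n → Idx n → TPt n → ℝ
  | Sum.inl h, Sum.inl j, Sum.inl i => fun p => Christoffel g ginv h j i p.1
  | Sum.inr h, Sum.inr j, Sum.inl i => fun p => Christoffel g ginv h j i p.1
  | Sum.inr h, Sum.inl j, Sum.inr i => fun p => Christoffel g ginv h j i p.1
  | Sum.inr h, Sum.inl j, Sum.inl i => fun p =>
      (∑ t, p.2 t * pd (fun z => Christoffel g ginv h j i z) t p.1)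
        + Hcoef g ginv a h j i p.1 - ∑ k, p.2 k * Riem g ginv k j i h p.1
  | _, _, _ => fun _ => 0

/-- Components `Γ̄^A_{BC}` of the metric connection `∇̄` of the complete lift metric `^C g`
(the horizontal lift `^H ∇` of the Levi-Civita connection of `g`). -/
def GammaBar (g ginv : (Fin n → ℝ) → Fin n → Fin n → ℝ) :
    Idx n → Idx n → Idx n → TPt n → ℝ
  | Sum.inl h, Sum.inl j, Sum.inl i => fun p => Christoffel g ginv h j i p.1
  | Sum.inr h, Sum.inr j, Sum.inl i => fun p => Christoffel g ginv h j i p.1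
  | Sum.inr h, Sum.inl j, Sum.inr i => fun p => Christoffel g ginv h j i p.1
  | Sum.inr h, Sum.inl j, Sum.inl i => fun p =>
      (∑ t, p.2 t * pd (fun z => Christoffel g ginv h j i z) t p.1)
        - ∑ k, p.2 k * Riem g ginv k j i h p.1
  | _, _, _ => fun _ => 0

/-- Vertical lift `^V H` of the `(1,2)`-tensor field `H`, as a difference of connections. -/
def vertH (g ginv a : (Fin n → ℝ) → Fin n → Fin n → ℝ) :
    Idx n → Idx n → Idx n → TPt n → ℝ
  | Sum.inr h, Sum.inl j, Sum.inl i => fun p => Hcoef g ginv a h j i p.1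
  | _, _, _ => fun _ => 0

/-- Covector field associated with a vector field `V` on `(T(M_n), ^S g)`. -/
def assocCov (g a : (Fin n → ℝ) → Fin n → Fin n → ℝ) (V : TPt n → Idx n → ℝ)
    (p : TPt n) (C : Idx n) : ℝ :=
  ∑ A, synMetric g a p C A * V p A

/-- The vertical vector field `ιC` with components `(0, yⁱ C_iᵏ)`. -/
def iotaT (C : (Fin n → ℝ) → Fin n → Fin n → ℝ) (p : TPt n) : Idx n → ℝ
  | Sum.inl _ => 0
  | Sum.inr k => ∑ i, p.2 i * C p.1 i k

/-- `X` is a Killing vector field of `(M_n, g)`: `∇_j X_i + ∇_i X_j = 0`. -/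
def IsKillingBase (g ginv : (Fin n → ℝ) → Fin n → Fin n → ℝ)
    (X : (Fin n → ℝ) → Fin n → ℝ) : Prop :=
  ∀ x j i, covCov g ginv (lower g X) j i x + covCov g ginv (lower g X) i j x = 0

/-- `V` is a harmonic vector field of `(T(M_n), ^S g)`: its associated covector field is
closed and coclosed w.r.t. the Levi-Civita connection of the synectic metric. -/
def IsHarmonicT (g ginv a : (Fin n → ℝ) → Fin n → Fin n → ℝ)
    (V : TPt n → Idx n → ℝ) : Prop :=
  (∀ p B A, covCovT (synMetric g a) (synMetricInv ginv a) (assocCov g a V) B A p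
      - covCovT (synMetric g a) (synMetricInv ginv a) (assocCov g a V) A B p = 0)
  ∧ (∀ p, ∑ B, ∑ A, synMetricInv ginv a p B A *
      covCovT (synMetric g a) (synMetricInv ginv a) (assocCov g a V) B A p = 0)

/-- `X` is a harmonic vector field of `(M_n, g)`: its associated `1`-form is closed and
coclosed. -/
def IsHarmonicBase (g ginv : (Fin n → ℝ) → Fin n → Fin n → ℝ)
    (X : (Fin n → ℝ) → Fin n → ℝ) : Prop :=
  (∀ x j i, covCov g ginv (lower g X) j i x - covCov g ginv (lower g X) i j x = 0)
  ∧ (∀ x, ∑ j, ∑ i, ginv x j i * covCov g ginv (lower g X) j i x = 0)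

/-- A vector field on `T(M_n)` is parallel w.r.t. a linear connection `Conn` if its covariant
derivative vanishes identically. -/
def IsParallelT (Conn : Idx n → Idx n → Idx n → TPt n → ℝ) (V : TPt n → Idx n → ℝ) : Prop :=
  ∀ p B A, covVecT Conn V B A p = 0

/-- `X` is parallel on `M_n`: `∇_j Xʰ = 0`. -/
def IsParallelBase (g ginv : (Fin n → ℝ) → Fin n → Fin n → ℝ)
    (X : (Fin n → ℝ) → Fin n → ℝ) : Prop :=
  ∀ x j h, covVec g ginv X j h x = 0

/-! ### Auxiliary calculus lemmas -/

section Aux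

lemma contDiff_pd {f : (Fin n → ℝ) → ℝ} (hf : ContDiff ℝ (⊤ : ℕ∞) f) (j : Fin n) :
    ContDiff ℝ (⊤ : ℕ∞) (pd f j) :=
  (hf.fderiv_right (by simp)).clm_apply contDiff_const

lemma pd_hasFDerivAt {f : (Fin n → ℝ) → ℝ} {x : Fin n → ℝ} {L : (Fin n → ℝ) →L[ℝ] ℝ}
    (h : HasFDerivAt f L x) (j : Fin n) :
    pd f j x = L (Pi.single j 1) := by
  rw [pd, h.fderiv]

lemma pd_sum_mul (u v : Fin n → (Fin n → ℝ) → ℝ) (j : Fin n) (x : Fin n → ℝ)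
    (hu : ∀ h, DifferentiableAt ℝ (u h) x) (hv : ∀ h, DifferentiableAt ℝ (v h) x) :
    pd (fun z => ∑ h, u h z * v h z) j x
      = ∑ h, (pd (u h) j x * v h x + u h x * pd (v h) j x) := by
  have H : HasFDerivAt (fun z => ∑ h, u h z * v h z)
      (∑ h, (u h x • fderiv ℝ (v h) x + v h x • fderiv ℝ (u h) x)) x :=
    HasFDerivAt.fun_sum fun h _ => ((hu h).hasFDerivAt.mul (hv h).hasFDerivAt)
  rw [pd_hasFDerivAt H]
  simp only [ContinuousLinearMap.sum_apply, ContinuousLinearMap.add_apply,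
    ContinuousLinearMap.smul_apply, smul_eq_mul, pd]
  exact Finset.sum_congr rfl fun h _ => by ring

lemma pdT_fst_inl (F : (Fin n → ℝ) → ℝ) (p : TPt n) (j : Fin n)
    (hF : DifferentiableAt ℝ F p.1) :
    pdT (fun q : TPt n => F q.1) (Sum.inl j) p = pd F j p.1 := by
  have H : HasFDerivAt (fun q : TPt n => F q.1)
      ((fderiv ℝ F p.1).comp (ContinuousLinearMap.fst ℝ (Fin n → ℝ) (Fin n → ℝ))) p :=
    hF.hasFDerivAt.comp p hasFDerivAt_fst
  rw [pdT, H.fderiv]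
  rfl

lemma pdT_fst_inr (F : (Fin n → ℝ) → ℝ) (p : TPt n) (j : Fin n)
    (hF : DifferentiableAt ℝ F p.1) :
    pdT (fun q : TPt n => F q.1) (Sum.inr j) p = 0 := by
  have H : HasFDerivAt (fun q : TPt n => F q.1)
      ((fderiv ℝ F p.1).comp (ContinuousLinearMap.fst ℝ (Fin n → ℝ) (Fin n → ℝ))) p :=
    hF.hasFDerivAt.comp p hasFDerivAt_fst
  rw [pdT, H.fderiv]
  show fderiv ℝ F p.1 (0 : Fin n → ℝ) = 0
  simp

lemma pdT_const (c : ℝ) (A : Idx n) (p : TPt n) :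
    pdT (fun _ : TPt n => c) A p = 0 := by
  simp [pdT]

lemma affine_hasFDerivAt (F : (Fin n → ℝ) → ℝ) (Gf : Fin n → (Fin n → ℝ) → ℝ)
    (p : TPt n) (hF : DifferentiableAt ℝ F p.1)
    (hG : ∀ s, DifferentiableAt ℝ (Gf s) p.1) :
    HasFDerivAt (fun q : TPt n => F q.1 + ∑ s, q.2 s * Gf s q.1)
      ((fderiv ℝ F p.1).comp (ContinuousLinearMap.fst ℝ (Fin n → ℝ) (Fin n → ℝ))
        + ∑ s, (p.2 s • ((fderiv ℝ (Gf s) p.1).comp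
                  (ContinuousLinearMap.fst ℝ (Fin n → ℝ) (Fin n → ℝ)))
              + Gf s p.1 • ((ContinuousLinearMap.proj s).comp
                  (ContinuousLinearMap.snd ℝ (Fin n → ℝ) (Fin n → ℝ))))) p := by
  have h1 : HasFDerivAt (fun q : TPt n => F q.1)
      ((fderiv ℝ F p.1).comp (ContinuousLinearMap.fst ℝ (Fin n → ℝ) (Fin n → ℝ))) p :=
    hF.hasFDerivAt.comp p hasFDerivAt_fst
  refine h1.add (HasFDerivAt.fun_sum fun s _ => ?_)
  have h2 : HasFDerivAt (fun q : TPt n => q.2 s)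
      ((ContinuousLinearMap.proj s).comp
        (ContinuousLinearMap.snd ℝ (Fin n → ℝ) (Fin n → ℝ))) p :=
    ((ContinuousLinearMap.proj s).comp
      (ContinuousLinearMap.snd ℝ (Fin n → ℝ) (Fin n → ℝ))).hasFDerivAt
  have h3 : HasFDerivAt (fun q : TPt n => Gf s q.1)
      ((fderiv ℝ (Gf s) p.1).comp (ContinuousLinearMap.fst ℝ (Fin n → ℝ) (Fin n → ℝ))) p :=
    (hG s).hasFDerivAt.comp p hasFDerivAt_fst
  exact h2.mul h3

lemma pdT_affine_inl (F : (Fin n → ℝ) → ℝ) (Gf : Fin n → (Fin n → ℝ) → ℝ)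
    (p : TPt n) (j : Fin n) (hF : DifferentiableAt ℝ F p.1)
    (hG : ∀ s, DifferentiableAt ℝ (Gf s) p.1) :
    pdT (fun q : TPt n => F q.1 + ∑ s, q.2 s * Gf s q.1) (Sum.inl j) p
      = pd F j p.1 + ∑ s, p.2 s * pd (Gf s) j p.1 := by
  rw [pdT, (affine_hasFDerivAt F Gf p hF hG).fderiv]
  simp only [eIdx, ContinuousLinearMap.add_apply, ContinuousLinearMap.coe_comp',
    Function.comp_apply, ContinuousLinearMap.coe_fst', ContinuousLinearMap.sum_apply,
    ContinuousLinearMap.smul_apply, ContinuousLinearMap.coe_snd',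
    ContinuousLinearMap.proj_apply, smul_eq_mul, pd]
  simp [Pi.zero_apply]

lemma pdT_affine_inr (F : (Fin n → ℝ) → ℝ) (Gf : Fin n → (Fin n → ℝ) → ℝ)
    (p : TPt n) (j : Fin n) (hF : DifferentiableAt ℝ F p.1)
    (hG : ∀ s, DifferentiableAt ℝ (Gf s) p.1) :
    pdT (fun q : TPt n => F q.1 + ∑ s, q.2 s * Gf s q.1) (Sum.inr j) p
      = Gf j p.1 := by
  rw [pdT, (affine_hasFDerivAt F Gf p hF hG).fderiv]
  simp only [eIdx, ContinuousLinearMap.add_apply, ContinuousLinearMap.coe_comp',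
    Function.comp_apply, ContinuousLinearMap.coe_fst', ContinuousLinearMap.sum_apply,
    ContinuousLinearMap.smul_apply, ContinuousLinearMap.coe_snd',
    ContinuousLinearMap.proj_apply, smul_eq_mul]
  simp [Pi.single_apply]

end Aux

section Main

variable (g ginv a : (Fin n → ℝ) → Fin n → Fin n → ℝ) (X : (Fin n → ℝ) → Fin n → ℝ)

lemma pdT_G_ll_r (hg : ∀ j i, ContDiff ℝ (⊤ : ℕ∞) fun z => g z j i)
    (ha : ∀ j i, ContDiff ℝ (⊤ : ℕ∞) fun z => a z j i) (j i t : Fin n) (p : TPt n) :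
    pdT (fun q => synMetric g a q (Sum.inl j) (Sum.inl i)) (Sum.inr t) p
      = pd (fun z => g z j i) t p.1 :=
  pdT_affine_inr (fun z => a z j i) (fun s => pd (fun z => g z j i) s) p t
    (((ha j i).differentiable (by simp)) p.1)
    (fun s => ((contDiff_pd (hg j i) s).differentiable (by simp)) p.1)

lemma pdT_G_lr_l (hg : ∀ j i, ContDiff ℝ (⊤ : ℕ∞) fun z => g z j i) (j i t : Fin n) (p : TPt n) :
    pdT (fun q => synMetric g a q (Sum.inl j) (Sum.inr i)) (Sum.inl t) p
      = pd (fun z => g z j i) t p.1 :=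
  pdT_fst_inl (fun z => g z j i) p t (((hg j i).differentiable (by simp)) p.1)

lemma pdT_G_lr_r (hg : ∀ j i, ContDiff ℝ (⊤ : ℕ∞) fun z => g z j i) (j i t : Fin n) (p : TPt n) :
    pdT (fun q => synMetric g a q (Sum.inl j) (Sum.inr i)) (Sum.inr t) p = 0 :=
  pdT_fst_inr (fun z => g z j i) p t (((hg j i).differentiable (by simp)) p.1)

lemma pdT_G_rl_l (hg : ∀ j i, ContDiff ℝ (⊤ : ℕ∞) fun z => g z j i) (j i t : Fin n) (p : TPt n) :
    pdT (fun q => synMetric g a q (Sum.inr j) (Sum.inl i)) (Sum.inl t) p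
      = pd (fun z => g z j i) t p.1 :=
  pdT_fst_inl (fun z => g z j i) p t (((hg j i).differentiable (by simp)) p.1)

lemma pdT_G_rl_r (hg : ∀ j i, ContDiff ℝ (⊤ : ℕ∞) fun z => g z j i) (j i t : Fin n) (p : TPt n) :
    pdT (fun q => synMetric g a q (Sum.inr j) (Sum.inl i)) (Sum.inr t) p = 0 :=
  pdT_fst_inr (fun z => g z j i) p t (((hg j i).differentiable (by simp)) p.1)

lemma pdT_G_rr (j i : Fin n) (A : Idx n) (p : TPt n) :
    pdT (fun q => synMetric g a q (Sum.inr j) (Sum.inr i)) A p = 0 :=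
  pdT_const 0 A p

lemma contDiff_lower (hg : ∀ j i, ContDiff ℝ (⊤ : ℕ∞) fun z => g z j i)
    (hX : ∀ h, ContDiff ℝ (⊤ : ℕ∞) fun z => X z h) (i : Fin n) :
    ContDiff ℝ (⊤ : ℕ∞) (fun z => lower g X z i) := by
  simp only [lower]
  exact ContDiff.sum fun h _ => (hg i h).mul (hX h)

section Chr

variable (hg : ∀ j i, ContDiff ℝ (⊤ : ℕ∞) fun z => g z j i)
  (ha : ∀ j i, ContDiff ℝ (⊤ : ℕ∞) fun z => a z j i)

include hg ha

lemma chrT_l_lr (i j s : Fin n) (p : TPt n) :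
    ChristoffelT (synMetric g a) (synMetricInv ginv a) (Sum.inl i) (Sum.inl j)
      (Sum.inr s) p = 0 := by
  rw [ChristoffelT, Fintype.sum_sum_type]
  simp [synMetricInv, pdT_G_rr g a, pdT_G_lr_r g a hg]

lemma chrT_l_rl (i j s : Fin n) (p : TPt n) :
    ChristoffelT (synMetric g a) (synMetricInv ginv a) (Sum.inl i) (Sum.inr j)
      (Sum.inl s) p = 0 := by
  rw [ChristoffelT, Fintype.sum_sum_type]
  simp [synMetricInv, pdT_G_rr g a, pdT_G_rl_r g a hg]

lemma chrT_l_rr (i j s : Fin n) (p : TPt n) :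
    ChristoffelT (synMetric g a) (synMetricInv ginv a) (Sum.inl i) (Sum.inr j)
      (Sum.inr s) p = 0 := by
  rw [ChristoffelT, Fintype.sum_sum_type]
  simp [synMetricInv, pdT_G_rr g a, pdT_G_rl_r g a hg, pdT_G_lr_r g a hg]

lemma chrT_r_lr (i j s : Fin n) (p : TPt n) :
    ChristoffelT (synMetric g a) (synMetricInv ginv a) (Sum.inr i) (Sum.inl j)
      (Sum.inr s) p = Christoffel g ginv i j s p.1 := by
  rw [ChristoffelT, Fintype.sum_sum_type]
  simp only [synMetricInv, pdT_G_rr g a, pdT_G_lr_r g a hg, pdT_G_lr_l g a hg,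
    pdT_G_ll_r g a hg ha]
  simp [Christoffel]

lemma chrT_r_rl (i j s : Fin n) (p : TPt n) :
    ChristoffelT (synMetric g a) (synMetricInv ginv a) (Sum.inr i) (Sum.inr j)
      (Sum.inl s) p = Christoffel g ginv i j s p.1 := by
  rw [ChristoffelT, Fintype.sum_sum_type]
  simp only [synMetricInv, pdT_G_rr g a, pdT_G_rl_r g a hg, pdT_G_rl_l g a hg,
    pdT_G_ll_r g a hg ha]
  simp [Christoffel]

lemma chrT_r_rr (i j s : Fin n) (p : TPt n) :
    ChristoffelT (synMetric g a) (synMetricInv ginv a) (Sum.inr i) (Sum.inr j)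
      (Sum.inr s) p = 0 := by
  rw [ChristoffelT, Fintype.sum_sum_type]
  simp [synMetricInv, pdT_G_rr g a, pdT_G_rl_r g a hg, pdT_G_lr_r g a hg]

end Chr

section Omega

variable (hg : ∀ j i, ContDiff ℝ (⊤ : ℕ∞) fun z => g z j i)
  (ha : ∀ j i, ContDiff ℝ (⊤ : ℕ∞) fun z => a z j i)
  (hX : ∀ h, ContDiff ℝ (⊤ : ℕ∞) fun z => X z h)

include hg ha hX

lemma assocCov_vlift_l (q : TPt n) (i : Fin n) :
    assocCov g a (vlift X) q (Sum.inl i) = lower g X q.1 i := by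
  rw [assocCov, Fintype.sum_sum_type]
  simp [synMetric, vlift, lower]

lemma assocCov_vlift_r (q : TPt n) (i : Fin n) :
    assocCov g a (vlift X) q (Sum.inr i) = 0 := by
  rw [assocCov, Fintype.sum_sum_type]
  simp [synMetric, vlift]

lemma assocCov_clift_r (q : TPt n) (i : Fin n) :
    assocCov g a (clift X) q (Sum.inr i) = lower g X q.1 i := by
  rw [assocCov, Fintype.sum_sum_type]
  simp [synMetric, clift, lower]

lemma assocCov_clift_l (q : TPt n) (i : Fin n) :
    assocCov g a (clift X) q (Sum.inl i)
      = (fun z => ∑ h, a z i h * X z h) q.1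
          + ∑ s, q.2 s * pd (fun z => lower g X z i) s q.1 := by
  have key : ∀ s : Fin n, pd (fun z => lower g X z i) s q.1
      = ∑ h, (pd (fun z => g z i h) s q.1 * X q.1 h
            + g q.1 i h * pd (fun z => X z h) s q.1) := by
    intro s
    simp only [lower]
    exact pd_sum_mul (fun h z => g z i h) (fun h z => X z h) s q.1
      (fun h => ((hg i h).differentiable (by simp)) q.1)
      (fun h => ((hX h).differentiable (by simp)) q.1)
  rw [assocCov, Fintype.sum_sum_type]
  simp only [synMetric, clift, key]
  have e1 : ∀ h : Fin n, (a q.1 i h + ∑ s, q.2 s * pd (fun z => g z i h) s q.1) * X q.1 h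
      = a q.1 i h * X q.1 h + ∑ s, q.2 s * (pd (fun z => g z i h) s q.1 * X q.1 h) := by
    intro h
    rw [add_mul, Finset.sum_mul]
    congr 1
    exact Finset.sum_congr rfl fun s _ => by ring
  have e2 : ∀ h : Fin n, g q.1 i h * ∑ s, q.2 s * pd (fun z => X z h) s q.1
      = ∑ s, q.2 s * (g q.1 i h * pd (fun z => X z h) s q.1) := by
    intro h
    rw [Finset.mul_sum]
    exact Finset.sum_congr rfl fun s _ => by ring
  have e3 : ∀ s : Fin n, q.2 s * ∑ h, (pd (fun z => g z i h) s q.1 * X q.1 h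
        + g q.1 i h * pd (fun z => X z h) s q.1)
      = ∑ h, (q.2 s * (pd (fun z => g z i h) s q.1 * X q.1 h)
        + q.2 s * (g q.1 i h * pd (fun z => X z h) s q.1)) := by
    intro s
    rw [Finset.mul_sum]
    exact Finset.sum_congr rfl fun h _ => by ring
  simp only [e1, e2, e3, Finset.sum_add_distrib, mul_add, Finset.mul_sum]
  rw [add_assoc]
  congr 1
  congr 1 <;> exact Finset.sum_comm

lemma pdT_lower_l (p : TPt n) (i j : Fin n) :
    pdT (fun q : TPt n => lower g X q.1 i) (Sum.inl j) p
      = pd (fun z => lower g X z i) j p.1 :=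
  pdT_fst_inl _ p j (((contDiff_lower g X hg hX i).differentiable (by simp)) p.1)

lemma pdT_lower_r (p : TPt n) (i j : Fin n) :
    pdT (fun q : TPt n => lower g X q.1 i) (Sum.inr j) p = 0 :=
  pdT_fst_inr _ p j (((contDiff_lower g X hg hX i).differentiable (by simp)) p.1)

/-- `pdT` of the components of the associated covector fields. -/
lemma pdT_vlift_l_r (p : TPt n) (i j : Fin n) :
    pdT (fun q => assocCov g a (vlift X) q (Sum.inl i)) (Sum.inr j) p = 0 := by
  have : (fun q : TPt n => assocCov g a (vlift X) q (Sum.inl i))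
      = fun q : TPt n => lower g X q.1 i := funext fun q => assocCov_vlift_l g a X hg ha hX q i
  rw [this]
  exact pdT_fst_inr _ p j (((contDiff_lower g X hg hX i).differentiable (by simp)) p.1)

lemma pdT_vlift_r (p : TPt n) (i : Fin n) (B : Idx n) :
    pdT (fun q => assocCov g a (vlift X) q (Sum.inr i)) B p = 0 := by
  have : (fun q : TPt n => assocCov g a (vlift X) q (Sum.inr i))
      = fun _ : TPt n => (0 : ℝ) := funext fun q => assocCov_vlift_r g a X hg ha hX q i
  rw [this]
  exact pdT_const 0 B p

lemma pdT_clift_r_l (p : TPt n) (i j : Fin n) :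
    pdT (fun q => assocCov g a (clift X) q (Sum.inr i)) (Sum.inl j) p
      = pd (fun z => lower g X z i) j p.1 := by
  have : (fun q : TPt n => assocCov g a (clift X) q (Sum.inr i))
      = fun q : TPt n => lower g X q.1 i := funext fun q => assocCov_clift_r g a X hg ha hX q i
  rw [this]
  exact pdT_fst_inl _ p j (((contDiff_lower g X hg hX i).differentiable (by simp)) p.1)

lemma pdT_clift_r_r (p : TPt n) (i j : Fin n) :
    pdT (fun q => assocCov g a (clift X) q (Sum.inr i)) (Sum.inr j) p = 0 := by
  have : (fun q : TPt n => assocCov g a (clift X) q (Sum.inr i))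
      = fun q : TPt n => lower g X q.1 i := funext fun q => assocCov_clift_r g a X hg ha hX q i
  rw [this]
  exact pdT_fst_inr _ p j (((contDiff_lower g X hg hX i).differentiable (by simp)) p.1)

lemma pdT_clift_l_r (p : TPt n) (i j : Fin n) :
    pdT (fun q => assocCov g a (clift X) q (Sum.inl i)) (Sum.inr j) p
      = pd (fun z => lower g X z i) j p.1 := by
  have : (fun q : TPt n => assocCov g a (clift X) q (Sum.inl i))
      = fun q : TPt n => (fun z => ∑ h, a z i h * X z h) q.1
          + ∑ s, q.2 s * pd (fun z => lower g X z i) s q.1 :=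
    funext fun q => assocCov_clift_l g a X hg ha hX q i
  rw [this]
  exact pdT_affine_inr _ _ p j
    ((ContDiff.sum fun h _ => (ha i h).mul (hX h)).differentiable (by simp) p.1)
    (fun s => ((contDiff_pd (contDiff_lower g X hg hX i) s).differentiable (by simp)) p.1)

end Omega

end Main

/-- The synectic-metric trace of the covariant derivative of the associated
covector field of the vertical lift vanishes, and for the complete lift it equals twice the
divergence of `X` on `(M_n, g)`. -/
theorem trace_of_lifted_covector_derivatives {n : ℕ}
    (g ginv a : (Fin n → ℝ) → Fin n → Fin n → ℝ)
    (X : (Fin n → ℝ) → Fin n → ℝ)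
    (hg : ∀ j i, ContDiff ℝ (⊤ : ℕ∞) fun z => g z j i)
    (hgsymm : ∀ x j i, g x j i = g x i j)
    (hpos : ∀ (x v : Fin n → ℝ), v ≠ 0 → 0 < ∑ j, ∑ i, g x j i * v j * v i)
    (hginv : ∀ j i, ContDiff ℝ (⊤ : ℕ∞) fun z => ginv z j i)
    (hinv : ∀ x j k, ∑ i, g x j i * ginv x i k = if j = k then (1 : ℝ) else 0)
    (ha : ∀ j i, ContDiff ℝ (⊤ : ℕ∞) fun z => a z j i)
    (hasymm : ∀ x j i, a x j i = a x i j)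
    (hX : ∀ h, ContDiff ℝ (⊤ : ℕ∞) fun z => X z h)
    : (∀ p : TPt n, ∑ B, ∑ A, synMetricInv ginv a p B A *
          covCovT (synMetric g a) (synMetricInv ginv a) (assocCov g a (vlift X)) B A p = 0)
      ∧ (∀ p : TPt n, ∑ B, ∑ A, synMetricInv ginv a p B A *
          covCovT (synMetric g a) (synMetricInv ginv a) (assocCov g a (clift X)) B A p
            = 2 * ∑ j, ∑ i, ginv p.1 j i * covCov g ginv (lower g X) j i p.1) := by
  constructor
  · intro p
    simp only [covCovT, Fintype.sum_sum_type, synMetricInv,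
      pdT_vlift_r g a X hg ha hX, pdT_vlift_l_r g a X hg ha hX,
      chrT_l_lr g ginv a hg ha, chrT_l_rl g ginv a hg ha, chrT_l_rr g ginv a hg ha,
      chrT_r_lr g ginv a hg ha, chrT_r_rl g ginv a hg ha, chrT_r_rr g ginv a hg ha,
      assocCov_vlift_l g a X hg ha hX, assocCov_vlift_r g a X hg ha hX,
      pdT_lower_l g a X hg ha hX, pdT_lower_r g a X hg ha hX, pdT_const]
    simp
  · intro p
    simp only [covCovT, Fintype.sum_sum_type, synMetricInv,
      pdT_clift_r_l g a X hg ha hX, pdT_clift_r_r g a X hg ha hX,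
      pdT_clift_l_r g a X hg ha hX,
      chrT_l_lr g ginv a hg ha, chrT_l_rl g ginv a hg ha, chrT_l_rr g ginv a hg ha,
      chrT_r_lr g ginv a hg ha, chrT_r_rl g ginv a hg ha, chrT_r_rr g ginv a hg ha,
      assocCov_clift_r g a X hg ha hX, covCov,
      pdT_lower_l g a X hg ha hX, pdT_lower_r g a X hg ha hX, pdT_const, mul_sub,
      zero_mul, mul_zero, Finset.sum_const_zero, add_zero, zero_add, sub_zero, sub_self]
    ring

end Synectic
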